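/- (Lemma 3, second part) Let ψ and φ be probability vectors with sorted entries α_1 ≥ … ≥ α_n ≥ 0 and β_1 ≥ … ≥ β_n ≥ 0 respectively, and let c be a probability vector with sorted entries γ_1 ≥ … ≥ γ_k > 0. If ψ⊗c is majorized by φ⊗c, then for every l ∈ L_{ψ,φ} and every i with 1 ≤ i ≤ k−1, both of the following disjunctions hold: (γ_1·β_{l+1} > β_l·γ_i or γ_i·β_l < β_1·γ_{i+1}), and (γ_{i+1}·β_{l+1} > β_l·γ_k or γ_i·β_n < β_{l+1}·γ_{i+1}). -/

import Mathlib

open Finset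

/-- Sum of the `l` largest entries of `x` (maximum over subsets of size `l`),
counted with multiplicity: this is `S_l(x)` from the paper. -/
noncomputable def topSum {ι : Type*} [Fintype ι] (x : ι → ℝ) (l : ℕ) : ℝ :=
  sSup {s : ℝ | ∃ A : Finset ι, A.card = l ∧ s = ∑ i ∈ A, x i}

/-- Sum of the `l` smallest entries of `x` (minimum over subsets of size `l`). -/
noncomputable def botSum {ι : Type*} [Fintype ι] (x : ι → ℝ) (l : ℕ) : ℝ :=
  sInf {s : ℝ | ∃ A : Finset ι, A.card = l ∧ s = ∑ i ∈ A, x i}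

/-- `x` is majorized by `y` (written `x ≺ y`): for every `1 ≤ l ≤ N`,
the sum of the `l` largest entries of `x` is at most that of `y`. -/
def Majorized {ι : Type*} [Fintype ι] (x y : ι → ℝ) : Prop :=
  ∀ l : ℕ, 1 ≤ l → l ≤ Fintype.card ι → topSum x l ≤ topSum y l

/-- Tensor product of two vectors: all pairwise products of entries. -/
def tensor {ι κ : Type*} (x : ι → ℝ) (z : κ → ℝ) : ι × κ → ℝ :=
  fun p => x p.1 * z p.2

/-- `p`-fold tensor power of a vector. -/
def tensorPow {ι : Type*} (x : ι → ℝ) (p : ℕ) : (Fin p → ι) → ℝ :=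
  fun f => ∏ j, x (f j)

/-- Sum of the first `l` entries of a vector `x : Fin n → ℝ`. -/
def prefixSum {n : ℕ} (x : Fin n → ℝ) (l : ℕ) : ℝ :=
  ∑ j ∈ Finset.univ.filter (fun j : Fin n => (j : ℕ) < l), x j

/-- Sum of the entries of `x : Fin n → ℝ` from index `l` (0-based) on. -/
def suffixSum {n : ℕ} (x : Fin n → ℝ) (l : ℕ) : ℝ :=
  ∑ j ∈ Finset.univ.filter (fun j : Fin n => l ≤ (j : ℕ)), x j

/-- `E_l(x) = 1 - S_{l-1}(x)`: the sum of the entries of the probability vector `x`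
from the `l`-th largest to the smallest. -/
noncomputable def Evec {ι : Type*} [Fintype ι] (x : ι → ℝ) (l : ℕ) : ℝ :=
  1 - topSum x (l - 1)

/-- Vidal conversion probability `P(x → y) = min_{1 ≤ l ≤ N} E_l(x)/E_l(y)`. -/
noncomputable def vidalP {ι : Type*} [Fintype ι] (x y : ι → ℝ) : ℝ :=
  sInf {r : ℝ | ∃ l : ℕ, 1 ≤ l ∧ l ≤ Fintype.card ι ∧ r = Evec x l / Evec y l}

/-- Nonincreasing rearrangement of the entries of `x`, as a list. -/
noncomputable def sortedDesc {ι : Type*} [Fintype ι] (x : ι → ℝ) : List ℝ :=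
  ((Finset.univ.val.map x).sort (· ≤ ·)).reverse


section Helpers

variable {ι : Type*} [Fintype ι]

lemma topSum_bddAbove (x : ι → ℝ) (l : ℕ) :
    BddAbove {s : ℝ | ∃ A : Finset ι, A.card = l ∧ s = ∑ i ∈ A, x i} := by
  classical
  apply Set.Finite.bddAbove
  apply Set.Finite.subset (Set.finite_range (fun A : Finset ι => ∑ i ∈ A, x i))
  rintro s ⟨A, -, rfl⟩
  exact ⟨A, rfl⟩

lemma le_topSum' (x : ι → ℝ) {A : Finset ι} {l : ℕ} (h : A.card = l) :
    ∑ i ∈ A, x i ≤ topSum x l :=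
  le_csSup (topSum_bddAbove x l) ⟨A, h, rfl⟩

lemma topSum_le' (x : ι → ℝ) {l : ℕ} {c : ℝ} (hl : l ≤ Fintype.card ι)
    (h : ∀ A : Finset ι, A.card = l → ∑ i ∈ A, x i ≤ c) : topSum x l ≤ c := by
  apply csSup_le
  · obtain ⟨t, -, ht⟩ := Finset.exists_subset_card_eq
      (show l ≤ (Finset.univ : Finset ι).card by simpa using hl)
    exact ⟨_, t, ht, rfl⟩
  · rintro s ⟨A, hA, rfl⟩; exact h A hA

lemma exchange [DecidableEq ι] (x : ι → ℝ) (c : ℝ) (A R : Finset ι)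
    (hcard : A.card = R.card) (h1 : ∀ i ∈ R, c ≤ x i) (h2 : ∀ i ∉ R, x i ≤ c) :
    ∑ i ∈ A, x i ≤ ∑ i ∈ R, x i := by
  have h3 := Finset.card_inter_add_card_sdiff A R
  have h4 := Finset.card_inter_add_card_sdiff R A
  rw [Finset.inter_comm R A] at h4
  have hdc : (A \ R).card = (R \ A).card := by omega
  have e1 : ∑ i ∈ A \ R, x i ≤ ((A \ R).card : ℝ) * c := by
    calc ∑ i ∈ A \ R, x i ≤ ∑ _i ∈ A \ R, c :=
          Finset.sum_le_sum fun i hi => h2 i (Finset.mem_sdiff.mp hi).2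
      _ = _ := by rw [Finset.sum_const, nsmul_eq_mul]
  have e2 : ((R \ A).card : ℝ) * c ≤ ∑ i ∈ R \ A, x i := by
    calc ((R \ A).card : ℝ) * c = ∑ _i ∈ R \ A, c := by rw [Finset.sum_const, nsmul_eq_mul]
      _ ≤ _ := Finset.sum_le_sum fun i hi => h1 i (Finset.mem_sdiff.mp hi).1
  have s1 := Finset.sum_inter_add_sum_sdiff A R x
  have s2 := Finset.sum_inter_add_sum_sdiff R A x
  rw [Finset.inter_comm R A] at s2
  have hdc' : ((A \ R).card : ℝ) = ((R \ A).card : ℝ) := by exact_mod_cast hdc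
  rw [hdc'] at e1
  linarith

lemma key_maj [DecidableEq ι] {x y : ι → ℝ} (hmaj : Majorized x y)
    {L : ℕ} (hL1 : 1 ≤ L) (hL2 : L ≤ Fintype.card ι) {Ax Ry : Finset ι}
    (hAx : Ax.card = L) (hRy : Ry.card = L) (c : ℝ)
    (h1 : ∀ i ∈ Ry, c ≤ y i) (h2 : ∀ i ∉ Ry, y i ≤ c) :
    ∑ i ∈ Ax, x i ≤ ∑ i ∈ Ry, y i :=
  (le_topSum' x hAx).trans ((hmaj L hL1 hL2).trans (topSum_le' y hL2
    fun A hA => exchange y c A Ry (hA.trans hRy.symm) h1 h2))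

end Helpers

lemma card_filter_lt' (n l : ℕ) (h : l ≤ n) :
    ((Finset.univ : Finset (Fin n)).filter (fun j : Fin n => (j : ℕ) < l)).card = l := by
  have heq : (Finset.univ.filter (fun j : Fin n => (j : ℕ) < l)) =
      (Finset.range l).attachFin
        (fun m hm => lt_of_lt_of_le (Finset.mem_range.mp hm) h) := by
    ext j
    simp [Finset.mem_attachFin]
  rw [heq, Finset.card_attachFin, Finset.card_range]

lemma card_filter_ge' (n l : ℕ) (h : l ≤ n) :
    ((Finset.univ : Finset (Fin n)).filter (fun j : Fin n => l ≤ (j : ℕ))).card = n - l := by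
  classical
  have h1 := Finset.card_filter_add_card_filter_not
    (s := (Finset.univ : Finset (Fin n))) (p := fun j : Fin n => (j : ℕ) < l)
  have h2 : (Finset.univ.filter (fun j : Fin n => ¬ (j : ℕ) < l)) =
      Finset.univ.filter (fun j : Fin n => l ≤ (j : ℕ)) := by
    ext j; simp [not_lt]
  rw [card_filter_lt' n l h, h2, Finset.card_univ, Fintype.card_fin] at h1
  omega

lemma sum_suffix_eq {n : ℕ} (x : Fin n → ℝ) (l : ℕ) :
    ∑ j ∈ Finset.univ.filter (fun j : Fin n => l ≤ (j : ℕ)), x j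
      = (∑ j, x j) - prefixSum x l := by
  classical
  have h1 := Finset.sum_filter_add_sum_filter_not Finset.univ (fun j : Fin n => (j : ℕ) < l) x
  have h2 : (Finset.univ.filter (fun j : Fin n => ¬ (j : ℕ) < l)) =
      Finset.univ.filter (fun j : Fin n => l ≤ (j : ℕ)) := by
    ext j; simp [not_lt]
  rw [h2] at h1
  unfold prefixSum
  linarith

lemma sum_tensor_rect {n k : ℕ} (ψ : Fin n → ℝ) (γ : Fin k → ℝ)
    (P : Finset (Fin n)) (Q : Finset (Fin k)) :
    ∑ p ∈ P ×ˢ Q, tensor ψ γ p = (∑ j ∈ P, ψ j) * (∑ m ∈ Q, γ m) := by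
  rw [Finset.sum_product, Finset.sum_mul]
  exact Finset.sum_congr rfl fun j _ => by rw [Finset.mul_sum]; rfl

theorem stmt_4 {n k : ℕ} (hk : 1 ≤ k) (ψ φ : Fin n → ℝ) (γ : Fin k → ℝ)
    (hψa : Antitone ψ) (hφa : Antitone φ) (hγa : Antitone γ)
    (hψ0 : ∀ i, 0 ≤ ψ i) (hψ1 : ∑ i, ψ i = 1)
    (hφ0 : ∀ i, 0 ≤ φ i) (hφ1 : ∑ i, φ i = 1)
    (hγ0 : ∀ i, 0 < γ i) (hγ1 : ∑ i, γ i = 1)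
    (hcat : Majorized (tensor ψ γ) (tensor φ γ)) :
    ∀ l : ℕ, ∀ _hl1 : 1 ≤ l, ∀ hln : l < n,
      prefixSum ψ l > prefixSum φ l →
      ∀ i : ℕ, ∀ _hi1 : 1 ≤ i, ∀ hik : i ≤ k - 1,
      (γ ⟨0, by omega⟩ * φ ⟨l, hln⟩ > φ ⟨l - 1, by omega⟩ * γ ⟨i - 1, by omega⟩ ∨
        γ ⟨i - 1, by omega⟩ * φ ⟨l - 1, by omega⟩ < φ ⟨0, by omega⟩ * γ ⟨i, by omega⟩) ∧
      (γ ⟨i, by omega⟩ * φ ⟨l, hln⟩ > φ ⟨l - 1, by omega⟩ * γ ⟨k - 1, by omega⟩ ∨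
        γ ⟨i - 1, by omega⟩ * φ ⟨n - 1, by omega⟩ < φ ⟨l, hln⟩ * γ ⟨i, by omega⟩)
  := by
  classical
  intro l hl1 hln hmajl i hi1 hik
  have hik' : i < k := by omega
  have hn1 : 1 ≤ n := by omega
  unfold prefixSum at hmajl
  have hcard_prod : Fintype.card (Fin n × Fin k) = n * k := by simp
  set Pl : Finset (Fin n) := Finset.univ.filter (fun j : Fin n => (j : ℕ) < l) with hPldef
  set Qi : Finset (Fin k) := Finset.univ.filter (fun m : Fin k => (m : ℕ) < i) with hQidef
  have hPlc : Pl.card = l := card_filter_lt' n l (le_of_lt hln)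
  have hQic : Qi.card = i := card_filter_lt' k i (le_of_lt hik')
  constructor
  · -- first disjunction
    by_contra hcon
    push_neg at hcon
    obtain ⟨hA, hB⟩ := hcon
    set c : ℝ := φ ⟨l - 1, by omega⟩ * γ ⟨i - 1, by omega⟩ with hcdef
    have hLcard : (Pl ×ˢ Qi).card = l * i := by
      rw [Finset.card_product, hPlc, hQic]
    have hL1 : 1 ≤ l * i := Nat.mul_pos (by omega) (by omega)
    have hL2 : l * i ≤ Fintype.card (Fin n × Fin k) := by
      rw [hcard_prod]; exact Nat.mul_le_mul (by omega) (by omega)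
    have h1 : ∀ p ∈ Pl ×ˢ Qi, c ≤ tensor φ γ p := by
      rintro ⟨j, m⟩ hp
      rw [Finset.mem_product] at hp
      simp only [hPldef, hQidef, Finset.mem_filter, Finset.mem_univ, true_and] at hp
      obtain ⟨hj, hm⟩ := hp
      have e1 : φ ⟨l - 1, by omega⟩ ≤ φ j := hφa (by simp only [Fin.le_def, Fin.val_mk]; omega)
      have e2 : γ ⟨i - 1, by omega⟩ ≤ γ m := hγa (by simp only [Fin.le_def, Fin.val_mk]; omega)
      exact mul_le_mul e1 e2 (le_of_lt (hγ0 _)) (hφ0 _)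
    have h2 : ∀ p ∉ Pl ×ˢ Qi, tensor φ γ p ≤ c := by
      rintro ⟨j, m⟩ hp
      rw [Finset.mem_product] at hp
      simp only [hPldef, hQidef, Finset.mem_filter, Finset.mem_univ, true_and] at hp
      rcases not_and_or.mp hp with h | h
      · have hj : l ≤ (j : ℕ) := by omega
        have e1 : φ j ≤ φ ⟨l, hln⟩ := hφa (by simp only [Fin.le_def, Fin.val_mk]; omega)
        have e2 : γ m ≤ γ ⟨0, by omega⟩ := hγa (by simp only [Fin.le_def, Fin.val_mk]; omega)
        calc tensor φ γ (j, m) = φ j * γ m := rfl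
          _ ≤ φ ⟨l, hln⟩ * γ ⟨0, by omega⟩ :=
              mul_le_mul e1 e2 (le_of_lt (hγ0 _)) (hφ0 _)
          _ = γ ⟨0, by omega⟩ * φ ⟨l, hln⟩ := mul_comm _ _
          _ ≤ c := hA
      · have hm : i ≤ (m : ℕ) := by omega
        have e1 : φ j ≤ φ ⟨0, by omega⟩ := hφa (by simp only [Fin.le_def, Fin.val_mk]; omega)
        have e2 : γ m ≤ γ ⟨i, hik'⟩ := hγa (by simp only [Fin.le_def, Fin.val_mk]; omega)
        calc tensor φ γ (j, m) = φ j * γ m := rfl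
          _ ≤ φ ⟨0, by omega⟩ * γ ⟨i, hik'⟩ :=
              mul_le_mul e1 e2 (le_of_lt (hγ0 _)) (hφ0 _)
          _ ≤ γ ⟨i - 1, by omega⟩ * φ ⟨l - 1, by omega⟩ := hB
          _ = c := mul_comm _ _
    have hineq := key_maj hcat hL1 hL2 hLcard hLcard c h1 h2
    rw [sum_tensor_rect, sum_tensor_rect] at hineq
    have hSγpos : 0 < ∑ m ∈ Qi, γ m := by
      apply Finset.sum_pos (fun m _ => hγ0 m)
      exact ⟨⟨0, by omega⟩, by simp only [hQidef, Finset.mem_filter, Finset.mem_univ, true_and, Fin.val_mk]; omega⟩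
    have := (mul_le_mul_iff_of_pos_right hSγpos).mp hineq
    linarith
  · -- second disjunction
    by_contra hcon
    push_neg at hcon
    obtain ⟨hA, hB⟩ := hcon
    set c : ℝ := φ ⟨l, hln⟩ * γ ⟨i, hik'⟩ with hcdef
    set B : Finset (Fin n × Fin k) :=
      (Finset.univ.filter (fun j : Fin n => l ≤ (j : ℕ))) ×ˢ
        (Finset.univ.filter (fun m : Fin k => i ≤ (m : ℕ))) with hBdef
    have hBcard : B.card = (n - l) * (k - i) := by
      rw [hBdef, Finset.card_product, card_filter_ge' n l (by omega),
        card_filter_ge' k i (by omega)]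
    have hBlt : (n - l) * (k - i) < n * k := by
      calc (n - l) * (k - i) ≤ (n - l) * k := Nat.mul_le_mul_left _ (Nat.sub_le k i)
        _ < n * k := (Nat.mul_lt_mul_right (show 0 < k by omega)).mpr (by omega)
    have hBc : Bᶜ.card = n * k - (n - l) * (k - i) := by
      rw [Finset.card_compl, hBcard, hcard_prod]
    have hL1 : 1 ≤ n * k - (n - l) * (k - i) := by omega
    have hL2 : n * k - (n - l) * (k - i) ≤ Fintype.card (Fin n × Fin k) := by
      rw [hcard_prod]; omega
    have h1 : ∀ p ∈ Bᶜ, c ≤ tensor φ γ p := by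
      rintro ⟨j, m⟩ hp
      rw [Finset.mem_compl, hBdef, Finset.mem_product] at hp
      simp only [Finset.mem_filter, Finset.mem_univ, true_and] at hp
      rcases not_and_or.mp hp with h | h
      · have hj : (j : ℕ) < l := by omega
        have e1 : φ ⟨l - 1, by omega⟩ ≤ φ j := hφa (by simp only [Fin.le_def, Fin.val_mk]; omega)
        have e2 : γ ⟨k - 1, by omega⟩ ≤ γ m := hγa (by simp only [Fin.le_def, Fin.val_mk]; omega)
        calc c = γ ⟨i, hik'⟩ * φ ⟨l, hln⟩ := mul_comm _ _
          _ ≤ φ ⟨l - 1, by omega⟩ * γ ⟨k - 1, by omega⟩ := hA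
          _ ≤ φ j * γ m := mul_le_mul e1 e2 (le_of_lt (hγ0 _)) (hφ0 _)
          _ = tensor φ γ (j, m) := rfl
      · have hm : (m : ℕ) < i := by omega
        have e1 : φ ⟨n - 1, by omega⟩ ≤ φ j := hφa (by simp only [Fin.le_def, Fin.val_mk]; omega)
        have e2 : γ ⟨i - 1, by omega⟩ ≤ γ m := hγa (by simp only [Fin.le_def, Fin.val_mk]; omega)
        calc c ≤ γ ⟨i - 1, by omega⟩ * φ ⟨n - 1, by omega⟩ := hB
          _ = φ ⟨n - 1, by omega⟩ * γ ⟨i - 1, by omega⟩ := mul_comm _ _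
          _ ≤ φ j * γ m := mul_le_mul e1 e2 (le_of_lt (hγ0 _)) (hφ0 _)
          _ = tensor φ γ (j, m) := rfl
    have h2 : ∀ p ∉ Bᶜ, tensor φ γ p ≤ c := by
      rintro ⟨j, m⟩ hp
      rw [Finset.mem_compl, not_not, hBdef, Finset.mem_product] at hp
      simp only [Finset.mem_filter, Finset.mem_univ, true_and] at hp
      obtain ⟨hj, hm⟩ := hp
      have e1 : φ j ≤ φ ⟨l, hln⟩ := hφa (by simp only [Fin.le_def, Fin.val_mk]; omega)
      have e2 : γ m ≤ γ ⟨i, hik'⟩ := hγa (by simp only [Fin.le_def, Fin.val_mk]; omega)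
      exact mul_le_mul e1 e2 (le_of_lt (hγ0 _)) (hφ0 _)
    have hineq := key_maj hcat hL1 hL2 hBc hBc c h1 h2
    -- rewrite both sides via complements
    have htotψ : ∑ p, tensor ψ γ p = 1 := by
      rw [← Finset.univ_product_univ, sum_tensor_rect, hψ1, hγ1, one_mul]
    have htotφ : ∑ p, tensor φ γ p = 1 := by
      rw [← Finset.univ_product_univ, sum_tensor_rect, hφ1, hγ1, one_mul]
    have hsψ := Finset.sum_add_sum_compl B (tensor ψ γ)
    have hsφ := Finset.sum_add_sum_compl B (tensor φ γ)
    rw [htotψ] at hsψ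
    rw [htotφ] at hsφ
    have hBψsum : ∑ p ∈ B, tensor ψ γ p
        = (1 - prefixSum ψ l) * (1 - prefixSum γ i) := by
      rw [hBdef, sum_tensor_rect, sum_suffix_eq, sum_suffix_eq, hψ1, hγ1]
    have hBφsum : ∑ p ∈ B, tensor φ γ p
        = (1 - prefixSum φ l) * (1 - prefixSum γ i) := by
      rw [hBdef, sum_tensor_rect, sum_suffix_eq, sum_suffix_eq, hφ1, hγ1]
    have hTpos : 0 < 1 - prefixSum γ i := by
      have := sum_suffix_eq γ i
      rw [hγ1] at this
      rw [← this]
      apply Finset.sum_pos (fun m _ => hγ0 m)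
      exact ⟨⟨i, hik'⟩, by simp only [Finset.mem_filter, Finset.mem_univ, true_and, Fin.val_mk]; omega⟩
    have hfin : (1 - prefixSum φ l) * (1 - prefixSum γ i)
        ≤ (1 - prefixSum ψ l) * (1 - prefixSum γ i) := by
      rw [← hBφsum, ← hBψsum]; linarith
    have := (mul_le_mul_iff_of_pos_right hTpos).mp hfin
    unfold prefixSum at this
    linarith
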